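/- arXiv:1512.01448 — 2 statements merged into one kernel-verified Lean document; each statement's English description precedes it below -/
import Mathlib

section
/- Let D be a digraph on vertex set V = {1,…,n} such that α_1(D) = n and every vertex of D has in-degree exactly 2. Then for every f ∈ F[D,2] and every p ≥ 1, |Im(f^p)| < 2^{α_p(D)}. -/
open Function

/-- A `p`-walk in the digraph `D` on vertex set `Fin n`. -/
def IsPWalk {n : ℕ} (D : Fin n → Fin n → Prop) (p : ℕ) (w : Fin (p + 1) → Fin n) : Prop :=
  ∀ s : Fin p, D (w s.castSucc) (w s.succ)

/-- `alphaWalks D p` is the maximum number of pairwise independent `p`-walks in `D`. -/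
noncomputable def alphaWalks {n : ℕ} (D : Fin n → Fin n → Prop) (p : ℕ) : ℕ :=
  sSup {k : ℕ | ∃ W : Fin k → Fin (p + 1) → Fin n,
    (∀ i, IsPWalk D p (W i)) ∧ ∀ i j : Fin k, i ≠ j → ∀ s, W i s ≠ W j s}

/-- The interaction graph of an FDS: `(u,v)` is an arc iff `f_v` depends essentially on `x_u`. -/
def IG {n q : ℕ} (f : (Fin n → Fin q) → Fin n → Fin q) (u v : Fin n) : Prop :=
  ∃ x y : Fin n → Fin q, (∀ w : Fin n, w ≠ u → x w = y w) ∧ f x v ≠ f y v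

/-- Membership in `F[D,q]`: the interaction graph of `f` equals `D`. -/
def ExactIG {n q : ℕ} (D : Fin n → Fin n → Prop) (f : (Fin n → Fin q) → Fin n → Fin q) : Prop :=
  ∀ u v, IG f u v ↔ D u v

/-- Membership in `F(D,q)`: the interaction graph of `f` is contained in `D`. -/
def SubIG {n q : ℕ} (D : Fin n → Fin n → Prop) (f : (Fin n → Fin q) → Fin n → Fin q) : Prop :=
  ∀ u v, IG f u v → D u v

/-- A cycle of `D`, given by its list of (distinct) vertices, with arcs between consecutive
vertices, cyclically. A loop is a cycle with one vertex. -/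
def IsCycleList {n : ℕ} (D : Fin n → Fin n → Prop) (c : List (Fin n)) : Prop :=
  c ≠ [] ∧ c.Nodup ∧
    ∀ i : Fin c.length, D (c.get i) (c.get ⟨((i : ℕ) + 1) % c.length, Nat.mod_lt _ i.pos⟩)

/-- A path of `D`, given by its list of (distinct) vertices. -/
def IsPathList {n : ℕ} (D : Fin n → Fin n → Prop) (P : List (Fin n)) : Prop :=
  P.Nodup ∧ P.Chain' D

/-- `f^{(S)}`: update the coordinates in `S` only. -/
def applyBlock {n q : ℕ} (f : (Fin n → Fin q) → Fin n → Fin q) (S : Finset (Fin n))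
    (x : Fin n → Fin q) : Fin n → Fin q :=
  fun v => if v ∈ S then f x v else x v

/-- `f^σ = f^{(σ_t)} ∘ ⋯ ∘ f^{(σ_1)}`. -/
def applySchedule {n q : ℕ} (f : (Fin n → Fin q) → Fin n → Fin q)
    (σ : List (Finset (Fin n))) : (Fin n → Fin q) → Fin n → Fin q :=
  σ.foldl (fun g S => applyBlock f S ∘ g) id

/-- A block-sequential schedule: every vertex is updated exactly once. -/
def BlockSequential {n : ℕ} (σ : List (Finset (Fin n))) : Prop :=
  σ.Pairwise Disjoint ∧ ∀ v : Fin n, ∃ S ∈ σ, v ∈ S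

/-- A complete schedule: every vertex is updated at least once. -/
def CompleteSchedule {n : ℕ} (σ : List (Finset (Fin n))) : Prop :=
  ∀ v : Fin n, ∃ S ∈ σ, v ∈ S

/-- `T(D)`: the number of trivial strong components of `D`, i.e. the number of
vertices not lying on any cycle of `D`. -/
noncomputable def numTrivial {n : ℕ} (D : Fin n → Fin n → Prop) : ℕ :=
  Set.ncard {v : Fin n | ¬ ∃ c : List (Fin n), IsCycleList D c ∧ v ∈ c}

/-- All vertices of `D` can be covered by pairwise vertex-disjoint cycles. -/
def CoveredByDisjointCycles {n : ℕ} (D : Fin n → Fin n → Prop) : Prop :=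
  ∃ Cs : List (List (Fin n)), (∀ c ∈ Cs, IsCycleList D c) ∧
    Cs.Pairwise (fun a b => ∀ v ∈ a, v ∉ b) ∧ ∀ v : Fin n, ∃ c ∈ Cs, v ∈ c

/-!
`α₁(D) = n` means that the arcs of `D` contain a permutation `π`; iterating `π` gives `n`
independent `p`-walks, so `2 ^ n ≤ 2 ^ α_p(D)`, and as `Im(f^p) ⊆ Im(f)` it suffices that `f` is
not a bijection. If it were, every coordinate `f_v` would take each value on exactly half of
`{0,1}^n`. But `f_v` is a Boolean function of its two in-neighbours depending on both, and the
only balanced such functions are the two parities. So every `f_v` is invariant under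
complementing all inputs, `f (x + 1) = f x`, contradicting injectivity.
-/

section Walks

variable {n : ℕ} (D : Fin n → Fin n → Prop) (p : ℕ)

private lemma bddAbove_independentWalks :
    BddAbove {k : ℕ | ∃ W : Fin k → Fin (p + 1) → Fin n,
      (∀ i, IsPWalk D p (W i)) ∧ ∀ i j : Fin k, i ≠ j → ∀ s, W i s ≠ W j s} := by
  refine ⟨n, fun k ⟨W, _, hind⟩ => ?_⟩
  have hinj : Injective fun i => W i 0 := fun i j hij => by_contra fun hne => hind i j hne 0 hij
  simpa using Fintype.card_le_of_injective _ hinj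

lemma exists_independentWalks_alphaWalks :
    ∃ W : Fin (alphaWalks D p) → Fin (p + 1) → Fin n,
      (∀ i, IsPWalk D p (W i)) ∧ ∀ i j, i ≠ j → ∀ s, W i s ≠ W j s := by
  unfold alphaWalks
  refine Nat.sSup_mem ?_ (bddAbove_independentWalks D p)
  exact ⟨0, Fin.elim0, fun i => i.elim0, fun i => i.elim0⟩

lemma le_alphaWalks {k : ℕ} (W : Fin k → Fin (p + 1) → Fin n) (hW : ∀ i, IsPWalk D p (W i))
    (hind : ∀ i j, i ≠ j → ∀ s, W i s ≠ W j s) : k ≤ alphaWalks D p :=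
  le_csSup (bddAbove_independentWalks D p) ⟨W, hW, hind⟩

lemma exists_perm_of_alphaWalks_one_eq (ha : alphaWalks D 1 = n) :
    ∃ π : Equiv.Perm (Fin n), ∀ v, D v (π v) := by
  obtain ⟨W, hW, hind⟩ := exists_independentWalks_alphaWalks D 1
  generalize alphaWalks D 1 = k at ha W hW hind
  subst ha
  have hinj : ∀ s, Injective fun i => W i s := fun s i j hij =>
    by_contra fun hne => hind i j hne s hij
  let e (s : Fin 2) := Equiv.ofBijective _ (Finite.injective_iff_bijective.1 (hinj s))
  refine ⟨(e 0).symm.trans (e 1), fun v => ?_⟩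
  convert hW ((e 0).symm v) 0
  · exact ((e 0).apply_symm_apply v).symm
  · rfl

lemma le_alphaWalks_of_perm (π : Equiv.Perm (Fin n)) (hπ : ∀ v, D v (π v)) :
    n ≤ alphaWalks D p := by
  refine le_alphaWalks D p (fun v s => (π^[s] v)) (fun v s => ?_) fun u v huv s h => huv ?_
  · simp only [Fin.val_castSucc, Fin.val_succ, iterate_succ_apply']
    exact hπ _
  · exact π.injective.iterate _ h

end Walks

lemma Function.card_range_iterate_lt {α : Type*} [Finite α] {f : α → α} (hf : ¬Surjective f)
    {p : ℕ} (hp : 0 < p) : Nat.card (Set.range f^[p]) < Nat.card α := by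
  obtain ⟨y, hy⟩ : ∃ y, ∀ x, f x ≠ y := by simpa [Surjective] using hf
  obtain ⟨p, rfl⟩ := Nat.exists_eq_add_of_le' hp
  refine Finite.card_subtype_lt (x := y) ?_
  rintro ⟨x, hx⟩
  exact hy _ ((iterate_succ_apply' f p x).symm.trans hx)

lemma Fintype.card_pi_apply_eq {ι κ : Type*} [Fintype ι] [DecidableEq ι] [Fintype κ]
    [DecidableEq κ] (i : ι) (a : κ) :
    card {x : ι → κ // x i = a} = card κ ^ (card ι - 1) := by
  rw [card_subtype, ← piFinset_univ]
  exact card_filter_piFinset_const_eq_of_mem _ _ (Finset.mem_univ a)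

/-- A coordinate of a bijection of `κ^ι` takes each value on a set of size `|κ|^(|ι|-1)`, so it
cannot take a value exactly on a codimension-two subcube. -/
lemma not_forall_apply_eq_iff_of_bijective {ι κ : Type*} [Fintype ι] [DecidableEq ι] [Fintype κ]
    [DecidableEq κ] [Nontrivial κ] {f : (ι → κ) → ι → κ} (hf : Bijective f) {i j : ι}
    (hij : i ≠ j) (v : ι) (a b c : κ) : ¬∀ x, f x v = c ↔ x i = a ∧ x j = b := by
  intro h
  open Fintype in
  have hfiber : card {x // f x v = c} = card {y : ι → κ // y v = c} :=
    card_congr ((Equiv.ofBijective f hf).subtypeEquiv fun _ => Iff.rfl)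
  have hcube : card {x // f x v = c} = card {x : ι → κ // x i = a ∧ x j = b} :=
    card_congr (Equiv.subtypeEquivRight h)
  have hlt : card {x : ι → κ // x i = a ∧ x j = b} < card {x : ι → κ // x i = a} := by
    rw [← card_congr (Equiv.subtypeSubtypeEquivSubtypeInter (fun x : ι → κ => x i = a) (· j = b))]
    obtain ⟨b', hb'⟩ := exists_ne b
    refine card_subtype_lt (x := ⟨update (fun _ => a) j b', ?_⟩) ?_
    · simp [update_of_ne hij]
    · simpa using hb'
  rw [← hcube, hfiber, card_pi_apply_eq, ← card_pi_apply_eq i a] at hlt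
  exact hlt.false

section InteractionGraph

variable {n q : ℕ} {D : Fin n → Fin n → Prop} {f : (Fin n → Fin q) → Fin n → Fin q}

lemma ExactIG.subIG (hf : ExactIG D f) : SubIG D f := fun u v => (hf u v).1

lemma SubIG.apply_eq_of_forall_inNeighbor (hf : SubIG D f) {v : Fin n} {x y : Fin n → Fin q}
    (hxy : ∀ u, D u v → x u = y u) : f x v = f y v := by
  classical
  suffices hswap : ∀ T : Finset (Fin n), (∀ u ∈ T, ¬D u v) →
      f (fun w => if w ∈ T then y w else x w) v = f x v by
    rw [← hswap {u | ¬D u v} (by simp)]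
    congr with w
    by_cases hw : D w v <;> simp [hw, hxy]
  intro T
  induction T using Finset.induction_on with
  | empty => simp
  | insert a T _ ih =>
    intro hT
    rw [← ih fun u hu => hT u (Finset.mem_insert_of_mem hu)]
    by_contra hne
    refine hT a (Finset.mem_insert_self a T) (hf a v ⟨_, _, fun w hw => ?_, hne⟩)
    simp [hw]

lemma ExactIG.exists_binary [NeZero q] (hf : ExactIG D f) {v : Fin n}
    (hv : Set.ncard {u | D u v} = 2) :
    ∃ u₁ u₂ : Fin n, u₁ ≠ u₂ ∧ ∃ g : Fin q → Fin q → Fin q, (∀ x, f x v = g (x u₁) (x u₂)) ∧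
      (∃ a a' b, g a b ≠ g a' b) ∧ ∃ a b b', g a b ≠ g a b' := by
  obtain ⟨u₁, u₂, hne, hset⟩ := Set.ncard_eq_two.1 hv
  have hD : ∀ u, D u v ↔ u = u₁ ∨ u = u₂ := fun u => Set.ext_iff.1 hset u
  let g a b := f (fun w => if w = u₁ then a else if w = u₂ then b else 0) v
  have hg : ∀ x, f x v = g (x u₁) (x u₂) := fun x =>
    hf.subIG.apply_eq_of_forall_inNeighbor fun u hu => by
      rcases (hD u).1 hu with rfl | rfl <;> simp [hne.symm]
  refine ⟨u₁, u₂, hne, g, hg, ?_, ?_⟩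
  · obtain ⟨x, y, hxy, hfxy⟩ := (hf u₁ v).2 ((hD u₁).2 (Or.inl rfl))
    refine ⟨x u₁, y u₁, x u₂, ?_⟩
    rwa [hg, hg, ← hxy u₂ hne.symm] at hfxy
  · obtain ⟨x, y, hxy, hfxy⟩ := (hf u₂ v).2 ((hD u₂).2 (Or.inr rfl))
    refine ⟨x u₁, x u₂, y u₂, ?_⟩
    rwa [hg, hg, ← hxy u₁ hne] at hfxy

end InteractionGraph

lemma binary_bool_classification (g : Fin 2 → Fin 2 → Fin 2) (h₁ : ∃ a a' b, g a b ≠ g a' b)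
    (h₂ : ∃ a b b', g a b ≠ g a b') :
    (∀ a b, g (a + 1) (b + 1) = g a b) ∨ ∃ a₀ b₀, ∀ a b, g a b = g a₀ b₀ ↔ a = a₀ ∧ b = b₀ := by
  revert g
  decide

lemma ExactIG.apply_add_one_of_bijective {n : ℕ} {D : Fin n → Fin n → Prop}
    {f : (Fin n → Fin 2) → Fin n → Fin 2} (hf : ExactIG D f)
    (hdeg : ∀ v, Set.ncard {u | D u v} = 2) (hbij : Bijective f) (x : Fin n → Fin 2) :
    f (x + 1) = f x := by
  funext v
  obtain ⟨u₁, u₂, hne, g, hg, h₁, h₂⟩ := hf.exists_binary (hdeg v)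
  rcases binary_bool_classification g h₁ h₂ with hflip | ⟨a, b, hab⟩
  · simp [hg, hflip]
  · refine absurd (fun y => ?_) (not_forall_apply_eq_iff_of_bijective hbij hne v a b (g a b))
    rw [hg]
    exact hab _ _

/-- if `α_1(D) = n` and every vertex of `D` has in-degree exactly `2`, then
every `f ∈ F[D,2]` satisfies `|Im(f^p)| < 2 ^ α_p(D)` for every `p ≥ 1`. -/
theorem not_reaching_the_bound {n : ℕ} (hn : 1 ≤ n) (D : Fin n → Fin n → Prop)
    (ha : alphaWalks D 1 = n) (hdeg : ∀ v : Fin n, Set.ncard {u : Fin n | D u v} = 2)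
    (f : (Fin n → Fin 2) → Fin n → Fin 2) (hf : ExactIG D f) (p : ℕ) (hp : 1 ≤ p) :
    Nat.card (Set.range (f^[p])) < 2 ^ alphaWalks D p := by
  obtain ⟨π, hπ⟩ := exists_perm_of_alphaWalks_one_eq D ha
  have hnbij : ¬Bijective f := fun hbij => by
    have h := congrFun (hbij.1 (hf.apply_add_one_of_bijective hdeg hbij 0)) ⟨0, hn⟩
    simp at h
  calc Nat.card (Set.range (f^[p])) < Nat.card (Fin n → Fin 2) :=
        card_range_iterate_lt (fun hs => hnbij (Finite.surjective_iff_bijective.1 hs)) hp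
    _ = 2 ^ n := by simp
    _ ≤ 2 ^ alphaWalks D p := Nat.pow_le_pow_right two_pos (le_alphaWalks_of_perm D p π hπ)
end

section
/- Let D be a digraph on vertex set V = {1,…,n}, let q ≥ 2, let f ∈ F[D,q] and let σ be a complete schedule. Then |Per(f^σ)| ≤ q^{n − T(D)}. -/
open Function

/-!
A periodic point of `g = f^σ` is determined by its values on the vertices lying on cycles of
`D`. If two points agree on a set `J` of vertices closed under in-neighbours, so do all their
images under `g`, and since `σ` updates every vertex, their images also agree at each vertex
whose in-neighbours all lie in `J`. For periodic `x = g^N x` and `y = g^N y` this propagates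
agreement from the cyclic vertices to every acyclic vertex `v`, by well-founded induction over
the strict ancestors of `v`, which form such a set `J`. Restriction to the cyclic vertices thus
injects `Per(f^σ)` into `[q]^(n - T(D))`.
-/

open Set Relation

section Cycles

variable {α : Type*} {r : α → α → Prop}

lemma exists_walk_of_transGen {a b : α} (h : TransGen r a b) :
    ∃ k, 0 < k ∧ ∃ w : ℕ → α, w 0 = a ∧ w k = b ∧ ∀ i < k, r (w i) (w (i + 1)) := by
  induction h with
  | single hab =>
    refine ⟨1, one_pos, fun i => if i = 0 then a else _, rfl, rfl, fun i hi => ?_⟩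
    obtain rfl : i = 0 := by omega
    exact hab
  | @tail c d _ hcd ih =>
    obtain ⟨k, hk, w, hw0, hwk, hw⟩ := ih
    refine ⟨k + 1, k.succ_pos, fun i => if i ≤ k then w i else d, by simp [hw0], by simp, ?_⟩
    intro i hi
    rcases Nat.lt_or_ge i k with hik | hik
    · simpa [hik.le, Nat.succ_le_of_lt hik] using hw i hik
    · obtain rfl : i = k := by omega
      simpa [hwk] using hcd

/-- A shortest closed walk has no repeated vertex. -/
lemma exists_injOn_closedWalk {v : α} (h : ∃ k, 0 < k ∧ ∃ w : ℕ → α,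
      w 0 = v ∧ w k = v ∧ ∀ i < k, r (w i) (w (i + 1))) :
    ∃ k, 0 < k ∧ ∃ w : ℕ → α, w 0 = v ∧ w k = v ∧ (∀ i < k, r (w i) (w (i + 1))) ∧
      InjOn w (Iio k) := by
  classical
  obtain ⟨hk, w, hw0, hwk, hw⟩ := Nat.find_spec h
  refine ⟨Nat.find h, hk, w, hw0, hwk, hw, ?_⟩
  set k := Nat.find h
  by_contra hinj
  obtain ⟨i, j, hi, hj, hwij, hij⟩ : ∃ i j, i < k ∧ j < k ∧ w i = w j ∧ i < j := by
    simp only [InjOn, mem_Iio, not_forall] at hinj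
    obtain ⟨i, hi, j, hj, hwij, hne⟩ := hinj
    rcases Nat.lt_or_gt_of_ne hne with h' | h'
    · exact ⟨i, j, hi, hj, hwij, h'⟩
    · exact ⟨j, i, hj, hi, hwij.symm, h'⟩
  -- Cut out the loop `w i, …, w j`.
  let w' : ℕ → α := fun m => if m ≤ i then w m else w (m + (j - i))
  refine Nat.find_min h (m := k - (j - i)) (by omega) ⟨by omega, w', by simp [w', hw0], ?_, ?_⟩
  · simp only [w', if_neg (show ¬ k - (j - i) ≤ i by omega)]
    rwa [show k - (j - i) + (j - i) = k by omega]
  · intro m hm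
    rcases Nat.lt_or_ge m i with hmi | hmi
    · simpa [w', hmi.le, Nat.succ_le_of_lt hmi] using hw m (by omega)
    rcases Nat.eq_or_lt_of_le hmi with rfl | hmi
    · simpa [w', show i + 1 + (j - i) = j + 1 by omega, hwij] using hw j hj
    · simpa [w', show ¬ m ≤ i by omega, show ¬ m + 1 ≤ i by omega,
        show m + 1 + (j - i) = m + (j - i) + 1 by omega] using hw (m + (j - i)) (by omega)

end Cycles

lemma isCycleList_ofFn {n : ℕ} {D : Fin n → Fin n → Prop} {k : ℕ} (hk : 0 < k) {w : ℕ → Fin n}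
    (hwk : w k = w 0) (hw : ∀ i < k, D (w i) (w (i + 1))) (hinj : InjOn w (Iio k)) :
    IsCycleList D (List.ofFn fun i : Fin k => w i) := by
  refine ⟨by simpa using hk.ne', List.nodup_ofFn.mpr fun i j hij => Fin.ext (hinj i.2 j.2 hij),
    fun i => ?_⟩
  have hi : (i : ℕ) < k := by simpa using i.2
  simp only [List.get_ofFn, Fin.val_cast, List.length_ofFn]
  rcases Nat.lt_or_ge ((i : ℕ) + 1) k with hlt | hge
  · rw [Nat.mod_eq_of_lt hlt]
    exact hw i hi
  · have hik : (i : ℕ) + 1 = k := by omega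
    have := hw i hi
    rw [hik, Nat.mod_self, ← hwk]
    rwa [hik] at this

lemma exists_isCycleList_of_transGen {n : ℕ} {D : Fin n → Fin n → Prop} {v : Fin n}
    (h : TransGen D v v) : ∃ c, IsCycleList D c ∧ v ∈ c := by
  obtain ⟨k, hk, w, hw0, hwk, hw, hinj⟩ := exists_injOn_closedWalk (exists_walk_of_transGen h)
  refine ⟨_, isCycleList_ofFn hk (hwk.trans hw0.symm) hw hinj, ?_⟩
  exact List.mem_ofFn.mpr ⟨⟨0, hk⟩, hw0⟩

section Dynamics

variable {n q : ℕ} {f : (Fin n → Fin q) → Fin n → Fin q}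

lemma apply_eq_of_eqOn {J : Set (Fin n)} {a : Fin n} (ha : ∀ u, IG f u a → u ∈ J)
    {x y : Fin n → Fin q} (hxy : EqOn x y J) : f x a = f y a := by
  -- Move from `x` to `y` one coordinate at a time, in the order of `Fin n`.
  let z : ℕ → Fin n → Fin q := fun k w => if (w : ℕ) < k then y w else x w
  have hz : ∀ k, f (z k) a = f x a := by
    intro k
    induction k with
    | zero => simp [z]
    | succ k ih =>
      rw [← ih]
      by_cases hzk : z (k + 1) = z k
      · rw [hzk]
      obtain ⟨w, hw⟩ := ne_iff.mp hzk
      have hwk : (w : ℕ) = k := by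
        simp only [z] at hw
        split_ifs at hw <;> first | exact absurd rfl hw | omega
      have hoff : ∀ u, u ≠ w → z (k + 1) u = z k u := by
        intro u hu
        have : (u : ℕ) ≠ k := fun h => hu (Fin.ext (h.trans hwk.symm))
        simp only [z]
        split_ifs <;> first | rfl | omega
      by_contra hne
      have hxyw : x w = y w := hxy (ha w ⟨_, _, hoff, hne⟩)
      exact hw (by simp [z, hxyw])
  have hzn : z n = y := funext fun w => if_pos w.isLt
  rw [← hzn, hz]

def IsInClosed (f : (Fin n → Fin q) → Fin n → Fin q) (J : Set (Fin n)) : Prop :=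
  ∀ ⦃u a⦄, IG f u a → a ∈ J → u ∈ J

lemma IsInClosed.insert {J : Set (Fin n)} (hJ : IsInClosed f J) {v : Fin n}
    (hv : ∀ u, IG f u v → u ∈ J) : IsInClosed f (insert v J) := by
  rintro u a hua (rfl | ha)
  · exact mem_insert_of_mem _ (hv u hua)
  · exact mem_insert_of_mem _ (hJ hua ha)

lemma isInClosed_strictAncestors (v : Fin n) : IsInClosed f {u | TransGen (IG f) u v} :=
  fun _ _ hua ha => TransGen.head hua ha

lemma applyBlock_apply_eq_of_mem {J : Set (Fin n)} {a : Fin n} (ha : ∀ u, IG f u a → u ∈ J)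
    {S : Finset (Fin n)} (haS : a ∈ S) {x y : Fin n → Fin q} (hxy : EqOn x y J) :
    applyBlock f S x a = applyBlock f S y a := by
  simp only [applyBlock, if_pos haS]
  exact apply_eq_of_eqOn ha hxy

lemma eqOn_applyBlock {J : Set (Fin n)} (hJ : IsInClosed f J) (S : Finset (Fin n))
    {x y : Fin n → Fin q} (hxy : EqOn x y J) :
    EqOn (applyBlock f S x) (applyBlock f S y) J := by
  intro a ha
  by_cases haS : a ∈ S
  · exact applyBlock_apply_eq_of_mem (fun u hua => hJ hua ha) haS hxy
  · simp only [applyBlock, if_neg haS]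
    exact hxy ha

lemma foldl_applyBlock_comp (f : (Fin n → Fin q) → Fin n → Fin q)
    (σ : List (Finset (Fin n))) (g : (Fin n → Fin q) → Fin n → Fin q) :
    σ.foldl (fun g S => applyBlock f S ∘ g) g = applySchedule f σ ∘ g := by
  induction σ generalizing g with
  | nil => rfl
  | cons S σ ih =>
    rw [List.foldl_cons, ih]
    exact congrArg (· ∘ g) (ih (applyBlock f S ∘ id)).symm

lemma applySchedule_cons (f : (Fin n → Fin q) → Fin n → Fin q) (S : Finset (Fin n))
    (σ : List (Finset (Fin n))) :
    applySchedule f (S :: σ) = applySchedule f σ ∘ applyBlock f S :=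
  foldl_applyBlock_comp f σ _

lemma applySchedule_append (f : (Fin n → Fin q) → Fin n → Fin q)
    (σ τ : List (Finset (Fin n))) :
    applySchedule f (σ ++ τ) = applySchedule f τ ∘ applySchedule f σ := by
  rw [applySchedule, List.foldl_append]
  exact foldl_applyBlock_comp f τ _

lemma eqOn_applySchedule {J : Set (Fin n)} (hJ : IsInClosed f J) (σ : List (Finset (Fin n)))
    {x y : Fin n → Fin q} (hxy : EqOn x y J) :
    EqOn (applySchedule f σ x) (applySchedule f σ y) J := by
  induction σ generalizing x y with
  | nil => exact hxy
  | cons S σ ih => rw [applySchedule_cons]; exact ih (eqOn_applyBlock hJ S hxy)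

lemma eqOn_iterate_applySchedule {J : Set (Fin n)} (hJ : IsInClosed f J)
    (σ : List (Finset (Fin n))) {x y : Fin n → Fin q} (hxy : EqOn x y J) (k : ℕ) :
    EqOn ((applySchedule f σ)^[k] x) ((applySchedule f σ)^[k] y) J := by
  induction k with
  | zero => exact hxy
  | succ k ih =>
    rw [iterate_succ_apply', iterate_succ_apply']
    exact eqOn_applySchedule hJ σ ih

lemma applySchedule_apply_eq {J : Set (Fin n)} (hJ : IsInClosed f J) {v : Fin n}
    (hv : ∀ u, IG f u v → u ∈ J) {σ : List (Finset (Fin n))} (hσ : ∃ S ∈ σ, v ∈ S)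
    {x y : Fin n → Fin q} (hxy : EqOn x y J) :
    applySchedule f σ x v = applySchedule f σ y v := by
  obtain ⟨S, hS, hvS⟩ := hσ
  obtain ⟨σ₁, σ₂, rfl⟩ := List.append_of_mem hS
  have hvJ : EqOn (applyBlock f S (applySchedule f σ₁ x)) (applyBlock f S (applySchedule f σ₁ y))
      (insert v J) := by
    rintro a (rfl | ha)
    · exact applyBlock_apply_eq_of_mem hv hvS (eqOn_applySchedule hJ σ₁ hxy)
    · exact eqOn_applyBlock hJ S (eqOn_applySchedule hJ σ₁ hxy) ha
  rw [applySchedule_append, applySchedule_cons]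
  exact eqOn_applySchedule (hJ.insert hv) σ₂ hvJ (mem_insert v J)

lemma apply_eq_of_mem_periodicPts {σ : List (Finset (Fin n))} (hσ : CompleteSchedule σ)
    {x y : Fin n → Fin q} (hx : x ∈ periodicPts (applySchedule f σ))
    (hy : y ∈ periodicPts (applySchedule f σ)) {J : Set (Fin n)} (hJ : IsInClosed f J)
    {v : Fin n} (hv : ∀ u, IG f u v → u ∈ J) (hxy : EqOn x y J) : x v = y v := by
  obtain ⟨k, hk, hxk⟩ := hx
  obtain ⟨m, hm, hym⟩ := hy
  obtain ⟨p, hp⟩ : ∃ p, k * m = p + 1 := Nat.exists_eq_add_one.mpr (Nat.mul_pos hk hm)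
  have hxp : (applySchedule f σ)^[p + 1] x = x := hp ▸ hxk.mul_const m
  have hyp : (applySchedule f σ)^[p + 1] y = y := hp ▸ hym.const_mul k
  rw [← hxp, ← hyp, iterate_succ_apply', iterate_succ_apply']
  exact applySchedule_apply_eq hJ hv (hσ v) (eqOn_iterate_applySchedule hJ σ hxy p)

theorem eq_of_eqOn_cyclic {σ : List (Finset (Fin n))} (hσ : CompleteSchedule σ)
    {x y : Fin n → Fin q} (hx : x ∈ periodicPts (applySchedule f σ))
    (hy : y ∈ periodicPts (applySchedule f σ)) (hxy : EqOn x y {v | TransGen (IG f) v v}) :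
    x = y := by
  let r : Fin n → Fin n → Prop := fun u v => TransGen (IG f) u v ∧ ¬ TransGen (IG f) u u
  have : IsTrans (Fin n) r := ⟨fun _ _ _ huv hvw => ⟨huv.1.trans hvw.1, huv.2⟩⟩
  have : Std.Irrefl r := ⟨fun _ h => h.2 h.1⟩
  funext v
  induction v using (Finite.wellFounded_of_trans_of_irrefl r).induction with
  | _ v ih =>
    refine apply_eq_of_mem_periodicPts hσ hx hy (isInClosed_strictAncestors v)
      (fun u hu => TransGen.single hu) (fun u hu => ?_)
    by_cases hcyc : TransGen (IG f) u u
    · exact hxy hcyc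
    · exact ih u ⟨hu, hcyc⟩

lemma card_periodicPts_le {σ : List (Finset (Fin n))} (hσ : CompleteSchedule σ) {C : Set (Fin n)}
    (hC : {v | TransGen (IG f) v v} ⊆ C) :
    Nat.card (periodicPts (applySchedule f σ)) ≤ q ^ C.ncard := by
  have hinj : Function.Injective fun x : periodicPts (applySchedule f σ) => C.domRestrict x.1 :=
    fun x y hxy => Subtype.ext <| eq_of_eqOn_cyclic hσ x.2 y.2 fun v hv => congrFun hxy ⟨v, hC hv⟩
  simpa [Nat.card_fun, Nat.card_coe_set_eq] using Nat.card_le_card_of_injective _ hinj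

end Dynamics

theorem periodic_rank_complete_upper_bound_general {n q : ℕ}
    (D : Fin n → Fin n → Prop)
    (f : (Fin n → Fin q) → Fin n → Fin q) (hf : ExactIG D f)
    (σ : List (Finset (Fin n))) (hσ : CompleteSchedule σ) :
    Nat.card (Function.periodicPts (applySchedule f σ)) ≤ q ^ (n - numTrivial D) := by
  set C : Set (Fin n) := {v | ∃ c, IsCycleList D c ∧ v ∈ c}
  have hC : {v | TransGen (IG f) v v} ⊆ C := fun v hv =>
    exists_isCycleList_of_transGen (TransGen.mono (fun a b hab => (hf a b).1 hab) v v hv)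
  have hcard : C.ncard + numTrivial D = n :=
    (ncard_add_ncard_compl C).trans (Nat.card_fin n)
  simpa [← hcard] using card_periodicPts_le hσ hC

/-- for `q ≥ 2`, `f ∈ F[D,q]` and a complete schedule `σ`,
`|Per(f^σ)| ≤ q ^ (n - T(D))`. -/
theorem periodic_rank_complete_upper_bound {n q : ℕ} (hn : 1 ≤ n) (hq : 2 ≤ q)
    (D : Fin n → Fin n → Prop)
    (f : (Fin n → Fin q) → Fin n → Fin q) (hf : ExactIG D f)
    (σ : List (Finset (Fin n))) (hσ : CompleteSchedule σ) :
    Nat.card (Function.periodicPts (applySchedule f σ)) ≤ q ^ (n - numTrivial D) :=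
  periodic_rank_complete_upper_bound_general D f hf σ hσ
end
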